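/- Define g : (0, 2π) → ℝ by g(θ) = (1/4)·ln(5 − 4cos θ) − 1 + cos θ. Then g(θ) equals the real part of f_0 at the point v = −(1/2)e^{iθ}, i.e. g(θ) = (1/2)·ln|(1 − (1/2)e^{iθ})/((1/2)e^{iθ})| − 1 + cos θ, and for all θ ∈ (0,2π), g'(θ) = −4 sin θ (1 − cos θ)/(5 − 4cos θ). Consequently g is strictly decreasing on (0, π) and strictly increasing on (π, 2π), so along the circle |v| = 1/2 the real part of f_0 attains its maximum at θ = 0 and its minimum at θ = π. -/

import Mathlib

/-!
On the circle `v = -(1/2)e^{iθ}` one has `|1 + v|² = (5 - 4 cos θ)/4` and `|v| = 1/2`, so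
`Re f₀ = (1/4) ln(5 - 4 cos θ) - 1 + cos θ = g θ`. Differentiating,
`g' = sin θ / (5 - 4 cos θ) - sin θ = -4 sin θ (1 - cos θ)/(5 - 4 cos θ)`, whose sign is that of
`-sin θ` because `cos θ < 1` away from multiples of `2π`. Hence `g` decreases on `[0, π]` and
increases on `[π, 2π]`, and `g (2π) = g 0` gives the maximum at `0` and the minimum at `π`.
-/

open Real

/-- `g(θ) = (1/4)·ln(5 - 4cos θ) - 1 + cos θ`, the real part of the steep descent
exponent `f₀` along the circle `v = -(1/2)e^{iθ}`. -/
noncomputable def g (θ : ℝ) : ℝ := (1 / 4) * Real.log (5 - 4 * Real.cos θ) - 1 + Real.cos θ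

lemma five_sub_four_cos_pos (θ : ℝ) : 0 < 5 - 4 * cos θ := by
  linarith [cos_le_one θ]

lemma cos_lt_one_of_mem_Ioo {θ : ℝ} (hθ : θ ∈ Set.Ioo 0 (2 * π)) : cos θ < 1 := by
  refine (cos_le_one θ).lt_of_ne fun h => hθ.1.ne' ?_
  exact (cos_eq_one_iff_of_lt_of_lt (by linarith [hθ.1, pi_pos]) hθ.2).1 h

lemma sin_neg_of_pi_lt_of_lt_two_pi {θ : ℝ} (h₁ : π < θ) (h₂ : θ < 2 * π) : sin θ < 0 := by
  have := sin_neg_of_neg_of_neg_pi_lt (x := θ - 2 * π) (by linarith) (by linarith)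
  rwa [sin_sub_two_pi] at this

lemma hasDerivAt_g (θ : ℝ) :
    HasDerivAt g (-4 * sin θ * (1 - cos θ) / (5 - 4 * cos θ)) θ := by
  have hinner : HasDerivAt (fun t => 5 - 4 * cos t) (4 * sin θ) θ := by
    simpa using ((hasDerivAt_cos θ).const_mul 4).const_sub 5
  have hg := (((hinner.log (five_sub_four_cos_pos θ).ne').const_mul (1 / 4)).sub_const 1).add
    (hasDerivAt_cos θ)
  refine hg.congr_deriv ?_
  field_simp [(five_sub_four_cos_pos θ).ne']
  ring

lemma normSq_one_sub_ofReal_mul_exp_mul_I (r θ : ℝ) :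
    Complex.normSq (1 - r * Complex.exp (θ * Complex.I)) = 1 - 2 * r * cos θ + r ^ 2 := by
  rw [Complex.exp_mul_I, ← Complex.ofReal_cos, ← Complex.ofReal_sin, Complex.normSq_apply]
  simp only [Complex.sub_re, Complex.sub_im, Complex.mul_re, Complex.mul_im, Complex.add_re,
    Complex.add_im, Complex.ofReal_re, Complex.ofReal_im, Complex.I_re, Complex.I_im,
    Complex.one_re, Complex.one_im]
  nlinarith [sin_sq_add_cos_sq θ]

lemma norm_one_sub_half_exp_div_half_exp (θ : ℝ) :
    ‖(1 - (1 / 2) * Complex.exp (Complex.I * θ)) / ((1 / 2) * Complex.exp (Complex.I * θ))‖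
      = √(5 - 4 * cos θ) := by
  have hnum : ‖1 - (1 / 2) * Complex.exp (Complex.I * θ)‖ = √(5 - 4 * cos θ) / 2 := by
    have h := normSq_one_sub_ofReal_mul_exp_mul_I (1 / 2) θ
    push_cast at h
    rw [mul_comm Complex.I, Complex.norm_def, h, show (1 : ℝ) - 2 * (1 / 2) * cos θ + (1 / 2) ^ 2
      = (5 - 4 * cos θ) / 2 ^ 2 by ring, sqrt_div' _ (by norm_num), sqrt_sq (by norm_num)]
  rw [norm_div, norm_mul, Complex.norm_exp_I_mul_ofReal, hnum]
  norm_num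
  ring

lemma strictAntiOn_g : StrictAntiOn g (Set.Icc 0 π) := by
  refine strictAntiOn_of_deriv_neg (convex_Icc 0 π)
    (fun θ _ => (hasDerivAt_g θ).continuousAt.continuousWithinAt) fun θ hθ => ?_
  rw [interior_Icc] at hθ
  rw [(hasDerivAt_g θ).deriv]
  have hsin := sin_pos_of_pos_of_lt_pi hθ.1 hθ.2
  have hcos := cos_lt_one_of_mem_Ioo ⟨hθ.1, by linarith [hθ.2, pi_pos]⟩
  exact div_neg_of_neg_of_pos (by nlinarith) (five_sub_four_cos_pos θ)

lemma strictMonoOn_g : StrictMonoOn g (Set.Icc π (2 * π)) := by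
  refine strictMonoOn_of_deriv_pos (convex_Icc π (2 * π))
    (fun θ _ => (hasDerivAt_g θ).continuousAt.continuousWithinAt) fun θ hθ => ?_
  rw [interior_Icc] at hθ
  rw [(hasDerivAt_g θ).deriv]
  have hsin := sin_neg_of_pi_lt_of_lt_two_pi hθ.1 hθ.2
  have hcos := cos_lt_one_of_mem_Ioo ⟨by linarith [hθ.1, pi_pos], hθ.2⟩
  exact div_pos (by nlinarith) (five_sub_four_cos_pos θ)

lemma g_two_pi : g (2 * π) = g 0 := by
  simp only [g, cos_two_pi, cos_zero]

/-- `g(θ)` equals `Re f₀(-(1/2)e^{iθ}) = (1/2)·ln|(1 - (1/2)e^{iθ})/((1/2)e^{iθ})| - 1 + cos θ`,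
its derivative is `g'(θ) = -4 sin θ (1 - cos θ)/(5 - 4cos θ)` on `(0, 2π)`, `g` is strictly
decreasing on `(0, π)` and strictly increasing on `(π, 2π)`, so along the circle `|v| = 1/2`
the real part of `f₀` attains its maximum at `θ = 0` and its minimum at `θ = π`. -/
theorem statement12 :
    (∀ θ ∈ Set.Ioo (0 : ℝ) (2 * Real.pi),
        g θ = (1 / 2) * Real.log (‖
            ((1 - (1 / 2) * Complex.exp (Complex.I * θ)) /
              ((1 / 2) * Complex.exp (Complex.I * θ)))‖) - 1 + Real.cos θ) ∧
    (∀ θ ∈ Set.Ioo (0 : ℝ) (2 * Real.pi),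
        deriv g θ = -4 * Real.sin θ * (1 - Real.cos θ) / (5 - 4 * Real.cos θ)) ∧
    StrictAntiOn g (Set.Ioo 0 Real.pi) ∧
    StrictMonoOn g (Set.Ioo Real.pi (2 * Real.pi)) ∧
    (∀ θ ∈ Set.Ioo (0 : ℝ) (2 * Real.pi), g θ < g 0) ∧
    (∀ θ ∈ Set.Ioo (0 : ℝ) (2 * Real.pi), θ ≠ Real.pi → g Real.pi < g θ) := by
  have hπ := pi_pos
  refine ⟨fun θ _ => ?_, fun θ _ => (hasDerivAt_g θ).deriv,
    strictAntiOn_g.mono Set.Ioo_subset_Icc_self, strictMonoOn_g.mono Set.Ioo_subset_Icc_self,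
    fun θ hθ => ?_, fun θ hθ hne => ?_⟩
  · rw [norm_one_sub_half_exp_div_half_exp, log_sqrt (five_sub_four_cos_pos θ).le, g]
    ring
  · rcases le_or_gt θ π with h | h
    · exact strictAntiOn_g ⟨le_rfl, hπ.le⟩ ⟨hθ.1.le, h⟩ hθ.1
    · rw [← g_two_pi]
      exact strictMonoOn_g ⟨h.le, hθ.2.le⟩ ⟨by linarith, le_rfl⟩ hθ.2
  · rcases hne.lt_or_gt with h | h
    · exact strictAntiOn_g ⟨hθ.1.le, h.le⟩ ⟨hπ.le, le_rfl⟩ h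
    · exact strictMonoOn_g ⟨le_rfl, by linarith⟩ ⟨h.le, hθ.2.le⟩ h
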